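/- Every bounded bifunctional f : H_r × K_c → ℂ on the product of a row Hilbertian and a column Hilbertian is automatically strongly completely bounded, with ‖f‖_scb = ‖f‖. -/

import Mathlib

/-!
For unit vectors `η, ξ` one has `⟪η, f_s(v, u) ξ⟫ = ∑ⱼᵢ f(yⱼ, xᵢ) ⟪bⱼ* η, aᵢ ξ⟫`. Expanding the
inner products `⟪bⱼ* η, aᵢ ξ⟫` in an orthonormal basis `(eₖ)` of the finite-dimensional span of
the vectors `bⱼ* η, aᵢ ξ` rewrites this as `∑ₖ f(uₖ, vₖ)` with `uₖ = ∑ⱼ ⟪bⱼ* η, eₖ⟫ yⱼ` and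
`vₖ = ∑ᵢ ⟪eₖ, aᵢ ξ⟫ xᵢ`. Since `y` and `x` are orthonormal, Parseval gives
`∑ₖ ‖uₖ‖² = ∑ⱼ ‖bⱼ* η‖² ≤ ‖∑ⱼ bⱼ bⱼ*‖` and `∑ₖ ‖vₖ‖² = ∑ᵢ ‖aᵢ ξ‖² ≤ ‖∑ᵢ aᵢ* aᵢ‖`, and
Cauchy–Schwarz in `k` finishes. Conversely, `f_s` evaluated on `p ⊗ y` and `p ⊗ x`, with `p` the
rank-one projection onto a unit vector of `L`, is `f(y, x) p`, which recovers the bound on `f`.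
-/

open ContinuousLinearMap InnerProductSpace

theorem Orthonormal.norm_sum_smul_sq {𝕜 E ι : Type*} [RCLike 𝕜] [NormedAddCommGroup E]
    [InnerProductSpace 𝕜 E] [Fintype ι] {v : ι → E} (hv : Orthonormal 𝕜 v) (c : ι → 𝕜) :
    ‖∑ i, c i • v i‖ ^ 2 = ∑ i, ‖c i‖ ^ 2 := by
  rw [norm_sq_eq_re_inner (𝕜 := 𝕜), hv.inner_sum c c Finset.univ, map_sum]
  simp_rw [RCLike.conj_mul, ← RCLike.ofReal_pow, RCLike.ofReal_re]

theorem InnerProductSpace.isCompactOperator_rankOne {𝕜 E F : Type*} [RCLike 𝕜]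
    [NormedAddCommGroup E] [NormedSpace 𝕜 E] [NormedAddCommGroup F] [InnerProductSpace 𝕜 F]
    (x : E) (y : F) : IsCompactOperator (rankOne 𝕜 x y) :=
  (isCompactOperator_of_locallyCompactSpace_dom (innerSL 𝕜 y)).clm_comp (toSpanSingleton 𝕜 x)

theorem ContinuousLinearMap.sum_norm_apply_sq_le {𝕜 E F ι : Type*} [RCLike 𝕜]
    [NormedAddCommGroup E] [InnerProductSpace 𝕜 E] [CompleteSpace E]
    [NormedAddCommGroup F] [InnerProductSpace 𝕜 F] [CompleteSpace F] [Fintype ι]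
    (a : ι → E →L[𝕜] F) (ξ : E) :
    ∑ i, ‖a i ξ‖ ^ 2 ≤ ‖∑ i, adjoint (a i) ∘L a i‖ * ‖ξ‖ ^ 2 := by
  simp_rw [apply_norm_sq_eq_inner_adjoint_left, ← map_sum, ← sum_inner, ← sum_apply]
  calc _ ≤ ‖(∑ i, adjoint (a i) ∘L a i) ξ‖ * ‖ξ‖ := re_inner_le_norm _ _
    _ ≤ ‖∑ i, adjoint (a i) ∘L a i‖ * ‖ξ‖ * ‖ξ‖ := by gcongr; exact le_opNorm _ _
    _ = ‖∑ i, adjoint (a i) ∘L a i‖ * ‖ξ‖ ^ 2 := by ring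

theorem ContinuousLinearMap.norm_apply_apply_le_of_unit_norm {𝕜 E F G : Type*} [RCLike 𝕜]
    [NormedAddCommGroup E] [NormedSpace 𝕜 E] [NormedAddCommGroup F] [NormedSpace 𝕜 F]
    [NormedAddCommGroup G] [NormedSpace 𝕜 G] (f : E →L[𝕜] F →L[𝕜] G) {C : ℝ} (hC : 0 ≤ C)
    (h : ∀ y x, ‖y‖ = 1 → ‖x‖ = 1 → ‖f y x‖ ≤ C) (y : E) (x : F) :
    ‖f y x‖ ≤ C * ‖y‖ * ‖x‖ := by
  have hf : ‖f‖ ≤ C := opNorm_le_of_unit_norm hC fun y hy ↦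
    opNorm_le_of_unit_norm hC fun x hx ↦ h y x hy hx
  calc ‖f y x‖ ≤ ‖f‖ * ‖y‖ * ‖x‖ := f.le_opNorm₂ y x
    _ ≤ C * ‖y‖ * ‖x‖ := by gcongr

section Bifunctional

variable {H K E ι κ : Type*} [NormedAddCommGroup H] [InnerProductSpace ℂ H]
  [NormedAddCommGroup K] [InnerProductSpace ℂ K] [NormedAddCommGroup E] [InnerProductSpace ℂ E]
  [Fintype ι] [Fintype κ]

theorem OrthonormalBasis.norm_sum_apply_mul_inner_le {σ : Type*} [Fintype σ]
    (e : OrthonormalBasis σ ℂ E) (f : H →L[ℂ] K →L[ℂ] ℂ) {C : ℝ} (hC : 0 ≤ C)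
    (hf : ∀ y x, ‖f y x‖ ≤ C * ‖y‖ * ‖x‖) {y : ι → H} {x : κ → K}
    (hy : Orthonormal ℂ y) (hx : Orthonormal ℂ x) (B : ι → E) (A : κ → E) :
    ‖∑ j, ∑ i, f (y j) (x i) * inner ℂ (B j) (A i)‖ ≤
      C * √(∑ j, ‖B j‖ ^ 2) * √(∑ i, ‖A i‖ ^ 2) := by
  set u : σ → H := fun k ↦ ∑ j, inner ℂ (B j) (e k) • y j
  set v : σ → K := fun k ↦ ∑ i, inner ℂ (e k) (A i) • x i
  have hsum : ∑ j, ∑ i, f (y j) (x i) * inner ℂ (B j) (A i) = ∑ k, f (u k) (v k) := by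
    calc ∑ j, ∑ i, f (y j) (x i) * inner ℂ (B j) (A i)
        = ∑ j, ∑ i, ∑ k, f (y j) (x i) * (inner ℂ (B j) (e k) * inner ℂ (e k) (A i)) := by
          simp_rw [← Finset.mul_sum, e.sum_inner_mul_inner]
      _ = ∑ k, f (u k) (v k) := by
          simp only [u, v, map_sum, map_smul, sum_apply, smul_apply, smul_eq_mul, Finset.mul_sum]
          rw [Finset.sum_congr rfl fun j _ ↦ Finset.sum_comm, Finset.sum_comm]
          refine Finset.sum_congr rfl fun k _ ↦ ?_
          rw [Finset.sum_comm]
          exact Finset.sum_congr rfl fun i _ ↦ Finset.sum_congr rfl fun j _ ↦ by ring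
  have hu : ∑ k, ‖u k‖ ^ 2 = ∑ j, ‖B j‖ ^ 2 := by
    simp_rw [u, hy.norm_sum_smul_sq]
    rw [Finset.sum_comm]
    simp_rw [e.sum_sq_norm_inner_left]
  have hv : ∑ k, ‖v k‖ ^ 2 = ∑ i, ‖A i‖ ^ 2 := by
    simp_rw [v, hx.norm_sum_smul_sq]
    rw [Finset.sum_comm]
    simp_rw [e.sum_sq_norm_inner_right]
  calc ‖∑ j, ∑ i, f (y j) (x i) * inner ℂ (B j) (A i)‖
      ≤ ∑ k, C * ‖u k‖ * ‖v k‖ :=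
        hsum ▸ (norm_sum_le _ _).trans (Finset.sum_le_sum fun k _ ↦ hf _ _)
    _ = C * ∑ k, ‖u k‖ * ‖v k‖ := by simp_rw [Finset.mul_sum, mul_assoc]
    _ ≤ C * (√(∑ k, ‖u k‖ ^ 2) * √(∑ k, ‖v k‖ ^ 2)) := by
        gcongr; exact Real.sum_mul_le_sqrt_mul_sqrt _ _ _
    _ = C * √(∑ j, ‖B j‖ ^ 2) * √(∑ i, ‖A i‖ ^ 2) := by rw [hu, hv, mul_assoc]

theorem norm_sum_apply_mul_inner_le (f : H →L[ℂ] K →L[ℂ] ℂ) {C : ℝ} (hC : 0 ≤ C)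
    (hf : ∀ y x, ‖f y x‖ ≤ C * ‖y‖ * ‖x‖) {y : ι → H} {x : κ → K}
    (hy : Orthonormal ℂ y) (hx : Orthonormal ℂ x) (B : ι → E) (A : κ → E) :
    ‖∑ j, ∑ i, f (y j) (x i) * inner ℂ (B j) (A i)‖ ≤
      C * √(∑ j, ‖B j‖ ^ 2) * √(∑ i, ‖A i‖ ^ 2) := by
  let V := Submodule.span ℂ (Set.range B ∪ Set.range A)
  have : FiniteDimensional ℂ V :=
    FiniteDimensional.span_of_finite ℂ ((Set.finite_range B).union (Set.finite_range A))
  exact (stdOrthonormalBasis ℂ V).norm_sum_apply_mul_inner_le f hC hf hy hx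
    (fun j ↦ ⟨B j, Submodule.subset_span (.inl ⟨j, rfl⟩)⟩)
    (fun i ↦ ⟨A i, Submodule.subset_span (.inr ⟨i, rfl⟩)⟩)

theorem norm_sum_sum_smul_comp_le [CompleteSpace E] (f : H →L[ℂ] K →L[ℂ] ℂ) {C : ℝ}
    (hC : 0 ≤ C) (hf : ∀ y x, ‖f y x‖ ≤ C * ‖y‖ * ‖x‖) {y : ι → H} {x : κ → K}
    (hy : Orthonormal ℂ y) (hx : Orthonormal ℂ x) (b : ι → E →L[ℂ] E) (a : κ → E →L[ℂ] E) :
    ‖∑ j, ∑ i, f (y j) (x i) • (b j ∘L a i)‖ ≤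
      C * √‖∑ j, b j ∘L adjoint (b j)‖ * √‖∑ i, adjoint (a i) ∘L a i‖ := by
  refine opNorm_le_of_re_inner_le (by positivity) fun ξ η hξ hη ↦ ?_
  have hrow := sum_norm_apply_sq_le (fun j ↦ adjoint (b j)) η
  have hcol := sum_norm_apply_sq_le a ξ
  simp only [adjoint_adjoint, hξ, hη, one_pow, mul_one] at hrow hcol
  calc RCLike.re (inner ℂ ((∑ j, ∑ i, f (y j) (x i) • (b j ∘L a i)) ξ) η)
      ≤ ‖inner ℂ η ((∑ j, ∑ i, f (y j) (x i) • (b j ∘L a i)) ξ)‖ := by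
        rw [inner_re_symm]; exact RCLike.re_le_norm _
    _ = ‖∑ j, ∑ i, f (y j) (x i) * inner ℂ (adjoint (b j) η) (a i ξ)‖ := by
        simp only [sum_apply, smul_apply, comp_apply, inner_sum, inner_smul_right,
          adjoint_inner_left]
    _ ≤ C * √(∑ j, ‖adjoint (b j) η‖ ^ 2) * √(∑ i, ‖a i ξ‖ ^ 2) :=
        norm_sum_apply_mul_inner_le f hC hf hy hx _ _
    _ ≤ C * √‖∑ j, b j ∘L adjoint (b j)‖ * √‖∑ i, adjoint (a i) ∘L a i‖ := by
        gcongr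

end Bifunctional

open ContinuousLinearMap in
theorem row_column_bifunctional_scb_general
    {L : Type*} [NormedAddCommGroup L] [InnerProductSpace ℂ L] [CompleteSpace L]
    [Nontrivial L]
    {H K : Type*} [NormedAddCommGroup H] [InnerProductSpace ℂ H]
    [NormedAddCommGroup K] [InnerProductSpace ℂ K]
    (f : H →L[ℂ] K →L[ℂ] ℂ) (C : ℝ) (hC : 0 ≤ C) :
    (∀ (y : H) (x : K), ‖f y x‖ ≤ C * ‖y‖ * ‖x‖) ↔
      (∀ (m n : ℕ) (b : Fin m → (L →L[ℂ] L)) (a : Fin n → (L →L[ℂ] L))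
        (y : Fin m → H) (x : Fin n → K),
        (∀ j, IsCompactOperator (b j)) → (∀ i, IsCompactOperator (a i)) →
        Orthonormal ℂ y → Orthonormal ℂ x →
        ‖∑ j, ∑ i, f (y j) (x i) • (b j ∘L a i)‖ ≤
          C * Real.sqrt ‖∑ j, b j ∘L adjoint (b j)‖ *
            Real.sqrt ‖∑ i, adjoint (a i) ∘L a i‖) := by
  refine ⟨fun hf m n b a y x _ _ hy hx ↦ norm_sum_sum_smul_comp_le f hC hf hy hx b a,
    fun h ↦ norm_apply_apply_le_of_unit_norm f hC fun y x hy hx ↦ ?_⟩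
  obtain ⟨w, hw⟩ := exists_norm_eq L zero_le_one
  have hp := isCompactOperator_rankOne (𝕜 := ℂ) w w
  simpa [comp_rankOne, inner_self_eq_norm_sq_to_K, hw, norm_smul] using
    h 1 1 (fun _ ↦ rankOne ℂ w w) (fun _ ↦ rankOne ℂ w w) (fun _ ↦ y) (fun _ ↦ x)
      (fun _ ↦ hp) (fun _ ↦ hp) (orthonormal_subsingleton_iff.2 fun _ ↦ hy)
      (orthonormal_subsingleton_iff.2 fun _ ↦ hx)

open ContinuousLinearMap in
/-- Proposition 11: every bounded bifunctional `f : H_r × K_c → ℂ` is automatically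
strongly completely bounded with `‖f‖_scb = ‖f‖`.  Elements of `KH_r` and `KK_c`
are written `v = Σⱼ bⱼ ⊗ yⱼ` and `u = Σᵢ aᵢ ⊗ xᵢ` with compact coefficients and
orthonormal vectors, with quantum norms `‖v‖ = ‖Σⱼ bⱼ bⱼ*‖^{1/2}` (row) and
`‖u‖ = ‖Σᵢ aᵢ* aᵢ‖^{1/2}` (column); the strong amplification is
`f_s(v, u) = Σᵢⱼ f(yⱼ, xᵢ) bⱼ aᵢ`.  The statement: a constant `C ≥ 0` bounds `f`
iff it bounds `f_s`. -/
theorem row_column_bifunctional_scb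
    {L : Type*} [NormedAddCommGroup L] [InnerProductSpace ℂ L] [CompleteSpace L]
    [Nontrivial L]
    {H K : Type*} [NormedAddCommGroup H] [InnerProductSpace ℂ H] [CompleteSpace H]
    [NormedAddCommGroup K] [InnerProductSpace ℂ K] [CompleteSpace K]
    (f : H →L[ℂ] K →L[ℂ] ℂ) (C : ℝ) (hC : 0 ≤ C) :
    (∀ (y : H) (x : K), ‖f y x‖ ≤ C * ‖y‖ * ‖x‖) ↔
      (∀ (m n : ℕ) (b : Fin m → (L →L[ℂ] L)) (a : Fin n → (L →L[ℂ] L))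
        (y : Fin m → H) (x : Fin n → K),
        (∀ j, IsCompactOperator (b j)) → (∀ i, IsCompactOperator (a i)) →
        Orthonormal ℂ y → Orthonormal ℂ x →
        ‖∑ j, ∑ i, f (y j) (x i) • (b j ∘L a i)‖ ≤
          C * Real.sqrt ‖∑ j, b j ∘L adjoint (b j)‖ *
            Real.sqrt ‖∑ i, adjoint (a i) ∘L a i‖) :=
  row_column_bifunctional_scb_general f C hC
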